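/- Let w ∈ ℝ^N be a probability vector and q ∈ (0, 1/2). Then ∑_{i=1}^N i^{−q} w_i ≤ (1 + 1/√(1−2q)) · N_eff(w)^{−q}, where N_eff(w) = 1/∑_{i=1}^N w_i². -/

import Mathlib

/-! Split the indices at the effective sample size `M = (∑ wᵢ²)⁻¹`. On `i ≤ M`, Cauchy–Schwarz
bounds the sum by `(∑_{i ≤ M} i^(-2q))^(1/2) · M^(-1/2)`, and telescoping Bernoulli's inequality
`(1 - 1/i)^(1-2q) ≤ 1 - (1-2q)/i` gives `∑_{i ≤ M} i^(-2q) ≤ M^(1-2q)/(1-2q)`, so this part is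
at most `M^(-q)/√(1-2q)`. On `i > M`, `i^(-q) < M^(-q)` and the weights sum to `1`. -/

open Finset

lemma one_sub_mul_rpow_neg_le_rpow_sub_rpow {p x : ℝ} (hp0 : 0 ≤ p) (hp1 : p ≤ 1) (hx : 1 ≤ x) :
    (1 - p) * x ^ (-p) ≤ x ^ (1 - p) - (x - 1) ^ (1 - p) := by
  have hx0 : 0 < x := by linarith
  have hinv : x⁻¹ ≤ 1 := inv_le_one_of_one_le₀ hx
  have hBernoulli : (1 + -x⁻¹) ^ (1 - p) ≤ 1 + (1 - p) * -x⁻¹ :=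
    rpow_one_add_le_one_add_mul_self (by linarith) (by linarith) (by linarith)
  have hsplit : (x - 1) ^ (1 - p) = x ^ (1 - p) * (1 + -x⁻¹) ^ (1 - p) := by
    rw [← Real.mul_rpow hx0.le (by linarith)]
    field_simp
    ring_nf
  have hpow : x ^ (-p) = x ^ (1 - p) / x := by
    rw [← Real.rpow_sub_one hx0.ne']; ring_nf
  rw [hsplit, hpow]
  have := mul_le_mul_of_nonneg_left hBernoulli (Real.rpow_nonneg hx0.le (1 - p))
  have e : x ^ (1 - p) * (1 + (1 - p) * -x⁻¹) = x ^ (1 - p) - (1 - p) * (x ^ (1 - p) / x) := by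
    ring
  linarith

lemma sum_Icc_rpow_neg_le {p : ℝ} (hp0 : 0 ≤ p) (hp1 : p < 1) (n : ℕ) :
    ∑ i ∈ Icc 1 n, (i : ℝ) ^ (-p) ≤ (n : ℝ) ^ (1 - p) / (1 - p) := by
  have h1p : 0 < 1 - p := by linarith
  induction n with
  | zero => simp only [Icc_eq_empty_of_lt zero_lt_one, sum_empty]; positivity
  | succ n ih =>
    rw [sum_Icc_succ_top (by omega), le_div_iff₀ h1p, add_mul]
    have hstep := one_sub_mul_rpow_neg_le_rpow_sub_rpow (x := (n + 1 : ℕ)) hp0 hp1.le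
      (by exact_mod_cast Nat.le_add_left 1 n)
    rw [le_div_iff₀ h1p] at ih
    push_cast at hstep ⊢
    simp only [add_sub_cancel_right] at hstep
    linarith

lemma sum_rpow_neg_mul_le_of_le {q : ℝ} (hq0 : 0 ≤ q) (hq : q < 1 / 2) (N : ℕ) (w : ℕ → ℝ)
    {x : ℝ} (hx : 0 ≤ x) :
    ∑ i ∈ Icc 1 N with ((i : ℕ) : ℝ) ≤ x, (i : ℝ) ^ (-q) * w i
      ≤ √(x ^ (1 - 2 * q) / (1 - 2 * q)) * √(∑ i ∈ Icc 1 N, w i ^ 2) := by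
  have hsq : ∀ i : ℕ, ((i : ℝ) ^ (-q)) ^ 2 = (i : ℝ) ^ (-(2 * q)) := fun i => by
    rw [← Real.rpow_two, ← Real.rpow_mul i.cast_nonneg]; ring_nf
  have hsub : (Icc 1 N).filter (fun i : ℕ => (i : ℝ) ≤ x) ⊆ Icc 1 ⌊x⌋₊ := fun i hi => by
    simp only [mem_filter, mem_Icc] at hi ⊢
    exact ⟨hi.1.1, Nat.le_floor hi.2⟩
  have hhead : ∑ i ∈ Icc 1 N with ((i : ℕ) : ℝ) ≤ x, ((i : ℝ) ^ (-q)) ^ 2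
      ≤ x ^ (1 - 2 * q) / (1 - 2 * q) := calc
    _ ≤ ∑ i ∈ Icc 1 ⌊x⌋₊, (i : ℝ) ^ (-(2 * q)) := by
      simp only [hsq]
      exact sum_le_sum_of_subset_of_nonneg hsub fun i _ _ => by positivity
    _ ≤ (⌊x⌋₊ : ℝ) ^ (1 - 2 * q) / (1 - 2 * q) := sum_Icc_rpow_neg_le (by linarith) (by linarith) _
    _ ≤ x ^ (1 - 2 * q) / (1 - 2 * q) := by
      have : 0 < 1 - 2 * q := by linarith
      gcongr
      exact Nat.floor_le hx
  calc _ ≤ √(∑ i ∈ Icc 1 N with ((i : ℕ) : ℝ) ≤ x, ((i : ℝ) ^ (-q)) ^ 2)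
        * √(∑ i ∈ Icc 1 N with ((i : ℕ) : ℝ) ≤ x, w i ^ 2) := Real.sum_mul_le_sqrt_mul_sqrt _ _ _
    _ ≤ _ := by
      gcongr
      exact filter_subset _ _

lemma sum_rpow_neg_mul_le_of_lt {q : ℝ} (hq0 : 0 ≤ q) (s : Finset ℕ) {w : ℕ → ℝ}
    (hw : ∀ i, 0 ≤ w i) {x : ℝ} (hx : 0 < x) :
    ∑ i ∈ s with x < (i : ℕ), (i : ℝ) ^ (-q) * w i ≤ x ^ (-q) * ∑ i ∈ s, w i := calc
  _ ≤ ∑ i ∈ s with x < (i : ℕ), x ^ (-q) * w i := sum_le_sum fun i hi =>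
      mul_le_mul_of_nonneg_right
        (Real.rpow_le_rpow_of_nonpos hx (mem_filter.1 hi).2.le (by linarith)) (hw i)
  _ ≤ x ^ (-q) * ∑ i ∈ s, w i := by
      rw [← mul_sum]
      gcongr
      · exact fun i _ _ => hw i
      · apply filter_subset

lemma sqrt_rpow_div_mul_sqrt_inv {x : ℝ} (hx : 0 < x) (q : ℝ) :
    √(x ^ (1 - 2 * q) / (1 - 2 * q)) * √(x⁻¹) = x ^ (-q) / √(1 - 2 * q) := by
  have hpow : x ^ (1 - 2 * q) * x⁻¹ = x ^ (-q) * x ^ (-q) := by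
    rw [← Real.rpow_add hx, ← div_eq_mul_inv, ← Real.rpow_sub_one hx.ne']; ring_nf
  rw [Real.sqrt_div (by positivity), div_mul_eq_mul_div, ← Real.sqrt_mul (by positivity), hpow,
    Real.sqrt_mul_self (by positivity)]

lemma sum_sq_pos_of_sum_ne_zero {ι : Type*} {s : Finset ι} {w : ι → ℝ}
    (h : ∑ i ∈ s, w i ≠ 0) : 0 < ∑ i ∈ s, w i ^ 2 := by
  obtain ⟨i, hi, hwi⟩ := exists_ne_zero_of_sum_ne_zero h
  exact sum_pos' (fun j _ => sq_nonneg _) ⟨i, hi, by positivity⟩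

theorem stmt_6_general (N : ℕ) (w : ℕ → ℝ)
    (hnn : ∀ i, 0 ≤ w i) (hsum : ∑ i ∈ Finset.Icc 1 N, w i = 1)
    (q : ℝ) (hq0 : 0 < q) (hq : q < 1/2) :
    ∑ i ∈ Finset.Icc 1 N, (i : ℝ) ^ (-q) * w i
      ≤ (1 + 1 / Real.sqrt (1 - 2*q)) * ((∑ i ∈ Finset.Icc 1 N, (w i) ^ 2)⁻¹) ^ (-q) := by
  set S := ∑ i ∈ Icc 1 N, w i ^ 2
  have hS : 0 < S := sum_sq_pos_of_sum_ne_zero (by rw [hsum]; exact one_ne_zero)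
  have hx : 0 < S⁻¹ := inv_pos.2 hS
  rw [← sum_filter_add_sum_filter_not _ (fun i : ℕ => (i : ℝ) ≤ S⁻¹)]
  simp only [not_le]
  calc _ ≤ √((S⁻¹) ^ (1 - 2 * q) / (1 - 2 * q)) * √S + S⁻¹ ^ (-q) * 1 := by
        gcongr
        · exact sum_rpow_neg_mul_le_of_le hq0.le hq N w hx.le
        · exact hsum ▸ sum_rpow_neg_mul_le_of_lt hq0.le _ hnn hx
    _ = _ := by
      have key := sqrt_rpow_div_mul_sqrt_inv hx q
      rw [inv_inv] at key
      rw [key]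
      ring

/-- For a probability vector `w` (indexed by `1,…,N`) and `q ∈ (0,1/2)`,
`∑_{i=1}^N i^(-q) w_i ≤ (1 + 1/√(1-2q)) · N_eff(w)^(-q)` with `N_eff(w) = 1/∑ w_i²`. -/
theorem stmt_6 (N : ℕ) (hN : 0 < N) (w : ℕ → ℝ)
    (hnn : ∀ i, 0 ≤ w i) (hsum : ∑ i ∈ Finset.Icc 1 N, w i = 1)
    (q : ℝ) (hq0 : 0 < q) (hq : q < 1/2) :
    ∑ i ∈ Finset.Icc 1 N, (i : ℝ) ^ (-q) * w i
      ≤ (1 + 1 / Real.sqrt (1 - 2*q)) * ((∑ i ∈ Finset.Icc 1 N, (w i) ^ 2)⁻¹) ^ (-q) :=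
  stmt_6_general N w hnn hsum q hq0 hq
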